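/- Propagation of the lapse constraint (first part of Lemma 2.1): under the hypotheses in the context, the scalar function ℐ := ∂_ν log Ω + 2Ωω satisfies on U the homogeneous transport equation ∂_λ ℐ + X^a ∂_a ℐ + 2Ω ω̄ ℐ = 0 (summation over a ∈ {1,2}). -/

import Mathlib

/-! Apply `∂_ν` to (i). Commuting `∂_ν` past `∂_λ + X^a ∂_a` produces the term
`(∂_ν X^a) ψ_a`, which (ii) and the symmetry of `γ⁻¹` turn into `-4Ω² ζ·ψ`. Adding
`2Ω((iii) - (iv))` cancels it together with `B` and the `|ζ|²`, `|ψ|²` terms, and what remains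
of `(∂_λ + X^a ∂_a) ℐ` is `-2Ω ω̄ ℐ`. -/

open Topology Filter Set

/-- Partial derivative in the `i`-th coordinate direction on `ℝ⁴`, with coordinates
`(λ, ν, ω¹, ω²) = (x 0, x 1, x 2, x 3)`. -/
noncomputable def pdCoord (i : Fin 4) (f : (Fin 4 → ℝ) → ℝ) (x : Fin 4 → ℝ) : ℝ :=
  fderiv ℝ f x (Pi.single i 1)

/-- The constraint quantity `ℐ = ∂_ν log Ω + 2Ωω`. -/
noncomputable def constraintI (Ω ω : (Fin 4 → ℝ) → ℝ) : (Fin 4 → ℝ) → ℝ :=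
  fun x => pdCoord 1 (fun y => Real.log (Ω y)) x + 2 * Ω x * ω x

noncomputable def transportDeriv (X : Fin 2 → (Fin 4 → ℝ) → ℝ)
    (f : (Fin 4 → ℝ) → ℝ) (x : Fin 4 → ℝ) : ℝ :=
  pdCoord 0 f x + ∑ a : Fin 2, X a x * pdCoord a.succ.succ f x

lemma Matrix.IsSymm.sum_sum_mul_swap {n R : Type*} [Fintype n] [CommSemiring R]
    {M : Matrix n n R} (hM : M.IsSymm) (u v : n → R) :
    ∑ a, ∑ b, M a b * u b * v a = ∑ a, ∑ b, M a b * u a * v b := by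
  rw [Finset.sum_comm]
  simp_rw [hM.apply]

section Derivatives

variable {U : Set (Fin 4 → ℝ)} {X : Fin 2 → (Fin 4 → ℝ) → ℝ}
  {f g : (Fin 4 → ℝ) → ℝ} {x : Fin 4 → ℝ}

lemma pdCoord_congr_of_eqOn (hU : IsOpen U) (hx : x ∈ U) (h : Set.EqOn f g U) (i : Fin 4) :
    pdCoord i f x = pdCoord i g x := by
  rw [pdCoord, pdCoord, (h.eventuallyEq_of_mem (hU.mem_nhds hx)).fderiv_eq]

lemma pdCoord_add (hf : DifferentiableAt ℝ f x) (hg : DifferentiableAt ℝ g x) (i : Fin 4) :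
    pdCoord i (fun y => f y + g y) x = pdCoord i f x + pdCoord i g x := by
  simp only [pdCoord, fderiv_fun_add hf hg, add_apply]

lemma pdCoord_sum {ι : Type*} {s : Finset ι} {g : ι → (Fin 4 → ℝ) → ℝ}
    (hg : ∀ a ∈ s, DifferentiableAt ℝ (g a) x) (i : Fin 4) :
    pdCoord i (fun y => ∑ a ∈ s, g a y) x = ∑ a ∈ s, pdCoord i (g a) x := by
  simp only [pdCoord, fderiv_fun_sum hg, sum_apply]

lemma pdCoord_mul (hf : DifferentiableAt ℝ f x) (hg : DifferentiableAt ℝ g x) (i : Fin 4) :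
    pdCoord i (fun y => f y * g y) x = pdCoord i f x * g x + f x * pdCoord i g x := by
  simp only [pdCoord, ← Pi.mul_def, fderiv_mul hf hg, add_apply, smul_apply, smul_eq_mul]
  ring

lemma pdCoord_const_mul (hf : DifferentiableAt ℝ f x) (c : ℝ) (i : Fin 4) :
    pdCoord i (fun y => c * f y) x = c * pdCoord i f x := by
  simp [pdCoord, fderiv_const_mul hf]

lemma mul_pdCoord_log (hf : DifferentiableAt ℝ f x) (hfx : f x ≠ 0) (i : Fin 4) :
    f x * pdCoord i (fun y => Real.log (f y)) x = pdCoord i f x := by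
  simp [pdCoord, (hf.hasFDerivAt.log hfx).fderiv, hfx]

lemma ContDiffAt.differentiableAt_pdCoord (hf : ContDiffAt ℝ 2 f x) (i : Fin 4) :
    DifferentiableAt ℝ (pdCoord i f) x :=
  ((hf.fderiv_right (m := 1) le_rfl).differentiableAt one_ne_zero).clm_apply
    (differentiableAt_const _)

lemma ContDiffAt.pdCoord_comm (hf : ContDiffAt ℝ 2 f x) (i j : Fin 4) :
    pdCoord i (pdCoord j f) x = pdCoord j (pdCoord i f) x := by
  have hdf : DifferentiableAt ℝ (fderiv ℝ f) x :=
    (hf.fderiv_right (m := 1) le_rfl).differentiableAt one_ne_zero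
  have hsecond : ∀ k l : Fin 4,
      pdCoord k (pdCoord l f) x = fderiv ℝ (fderiv ℝ f) x (Pi.single k 1) (Pi.single l 1) := by
    intro k l
    change fderiv ℝ (fun y => fderiv ℝ f y (Pi.single l 1)) x (Pi.single k 1) = _
    simp [fderiv_clm_apply hdf (differentiableAt_const _)]
  rw [hsecond, hsecond, (hf.isSymmSndFDerivAt (by simp)).eq]

lemma transportDeriv_eq_fderiv :
    transportDeriv X f x
      = fderiv ℝ f x (Pi.single 0 1 + ∑ a : Fin 2, X a x • Pi.single a.succ.succ 1) := by
  simp [transportDeriv, pdCoord]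

lemma transportDeriv_add (hf : DifferentiableAt ℝ f x) (hg : DifferentiableAt ℝ g x) :
    transportDeriv X (fun y => f y + g y) x = transportDeriv X f x + transportDeriv X g x := by
  simp only [transportDeriv_eq_fderiv, fderiv_fun_add hf hg, add_apply]

lemma transportDeriv_mul (hf : DifferentiableAt ℝ f x) (hg : DifferentiableAt ℝ g x) :
    transportDeriv X (fun y => f y * g y) x
      = transportDeriv X f x * g x + f x * transportDeriv X g x := by
  simp only [transportDeriv_eq_fderiv, ← Pi.mul_def, fderiv_mul hf hg,
    add_apply, smul_apply, smul_eq_mul]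
  ring

lemma transportDeriv_const_mul (hf : DifferentiableAt ℝ f x) (c : ℝ) :
    transportDeriv X (fun y => c * f y) x = c * transportDeriv X f x := by
  simp only [transportDeriv_eq_fderiv, fderiv_const_mul hf, smul_apply, smul_eq_mul]

lemma mul_transportDeriv_log (hf : DifferentiableAt ℝ f x) (hfx : f x ≠ 0) :
    f x * transportDeriv X (fun y => Real.log (f y)) x = transportDeriv X f x := by
  simp only [transportDeriv, mul_add, Finset.mul_sum, mul_pdCoord_log hf hfx, mul_left_comm (f x)]

/-- The commutator `[∂_i, ∂_λ + X^a ∂_a] = (∂_i X^a) ∂_a`. -/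
lemma pdCoord_transportDeriv (hX : ∀ a, DifferentiableAt ℝ (X a) x) (hf : ContDiffAt ℝ 2 f x)
    (i : Fin 4) :
    pdCoord i (transportDeriv X f) x
      = transportDeriv X (pdCoord i f) x
        + ∑ a : Fin 2, pdCoord i (X a) x * pdCoord a.succ.succ f x := by
  have hterm : ∀ a ∈ Finset.univ,
      DifferentiableAt ℝ (fun y => X a y * pdCoord a.succ.succ f y) x :=
    fun a _ => (hX a).mul (hf.differentiableAt_pdCoord _)
  change pdCoord i (fun y => pdCoord 0 f y + ∑ a : Fin 2, X a y * pdCoord a.succ.succ f y) x = _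
  rw [pdCoord_add (hf.differentiableAt_pdCoord 0) (DifferentiableAt.fun_sum hterm),
    pdCoord_sum hterm]
  simp only [transportDeriv, pdCoord_mul (hX _) (hf.differentiableAt_pdCoord _),
    hf.pdCoord_comm i, Finset.sum_add_distrib]
  ring

lemma transportDeriv_constraintI {Ω ω : (Fin 4 → ℝ) → ℝ}
    (hΩ : ContDiffAt ℝ 2 (fun y => Real.log (Ω y)) x) (dΩ : DifferentiableAt ℝ Ω x)
    (dω : DifferentiableAt ℝ ω x) :
    transportDeriv X (constraintI Ω ω) x
      = transportDeriv X (pdCoord 1 (fun y => Real.log (Ω y))) x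
        + 2 * (transportDeriv X Ω x * ω x + Ω x * transportDeriv X ω x) := by
  change transportDeriv X (fun y => pdCoord 1 (fun y => Real.log (Ω y)) y + 2 * Ω y * ω y) x = _
  rw [transportDeriv_add (g := fun y => 2 * Ω y * ω y) (hΩ.differentiableAt_pdCoord 1)
      ((dΩ.const_mul 2).mul dω),
    transportDeriv_mul (f := fun y => 2 * Ω y) (dΩ.const_mul 2) dω, transportDeriv_const_mul dΩ]
  ring

end Derivatives

theorem lapse_constraint_propagation_general
    (U : Set (Fin 4 → ℝ)) (hU : IsOpen U)
    (Ω ω ωb B : (Fin 4 → ℝ) → ℝ)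
    (X ζ : Fin 2 → (Fin 4 → ℝ) → ℝ)
    (γ : (Fin 4 → ℝ) → Matrix (Fin 2) (Fin 2) ℝ)
    (hΩs : ContDiffOn ℝ (⊤ : ℕ∞) Ω U) (hΩpos : ∀ x ∈ U, 0 < Ω x)
    (hωs : ContDiffOn ℝ (⊤ : ℕ∞) ω U) (hωbs : ContDiffOn ℝ (⊤ : ℕ∞) ωb U)
    (hXs : ∀ a, ContDiffOn ℝ (⊤ : ℕ∞) (X a) U)
    (hγsym : ∀ x ∈ U, (γ x).IsSymm)
    -- (i)  ∂_λ log Ω + ∂_X log Ω + 2Ω ω̄ = 0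
    (heqI : ∀ x ∈ U,
      pdCoord 0 (fun y => Real.log (Ω y)) x +
        (∑ a : Fin 2, X a x * pdCoord a.succ.succ (fun y => Real.log (Ω y)) x) +
        2 * Ω x * ωb x = 0)
    -- (ii)  ∂_ν X^a + 4Ω² γ^{ab} ζ_b = 0
    (heqII : ∀ x ∈ U, ∀ a : Fin 2,
      pdCoord 1 (X a) x + 4 * Ω x ^ 2 * (∑ b : Fin 2, (γ x)⁻¹ a b * ζ b x) = 0)
    -- (iii)  ∂_λ ω + ∂_X ω − 2Ω ω̄ ω + Ω ζ·ψ − (3/2)Ω|ζ|² + (1/2)Ω|ψ|² + B = 0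
    (heqIII : ∀ x ∈ U,
      pdCoord 0 ω x + (∑ a : Fin 2, X a x * pdCoord a.succ.succ ω x) -
        2 * Ω x * ωb x * ω x +
        Ω x * (∑ a : Fin 2, ∑ b : Fin 2,
          (γ x)⁻¹ a b * ζ a x * pdCoord b.succ.succ (fun y => Real.log (Ω y)) x) -
        3 / 2 * Ω x * (∑ a : Fin 2, ∑ b : Fin 2, (γ x)⁻¹ a b * ζ a x * ζ b x) +
        1 / 2 * Ω x * (∑ a : Fin 2, ∑ b : Fin 2,
          (γ x)⁻¹ a b * pdCoord a.succ.succ (fun y => Real.log (Ω y)) x *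
            pdCoord b.succ.succ (fun y => Real.log (Ω y)) x) +
        B x = 0)
    -- (iv)  ∂_ν ω̄ − 2Ω ω ω̄ − Ω ζ·ψ − (3/2)Ω|ζ|² + (1/2)Ω|ψ|² + B = 0
    (heqIV : ∀ x ∈ U,
      pdCoord 1 ωb x - 2 * Ω x * ω x * ωb x -
        Ω x * (∑ a : Fin 2, ∑ b : Fin 2,
          (γ x)⁻¹ a b * ζ a x * pdCoord b.succ.succ (fun y => Real.log (Ω y)) x) -
        3 / 2 * Ω x * (∑ a : Fin 2, ∑ b : Fin 2, (γ x)⁻¹ a b * ζ a x * ζ b x) +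
        1 / 2 * Ω x * (∑ a : Fin 2, ∑ b : Fin 2,
          (γ x)⁻¹ a b * pdCoord a.succ.succ (fun y => Real.log (Ω y)) x *
            pdCoord b.succ.succ (fun y => Real.log (Ω y)) x) +
        B x = 0) :
    ∀ x ∈ U,
      pdCoord 0 (constraintI Ω ω) x +
        (∑ a : Fin 2, X a x * pdCoord a.succ.succ (constraintI Ω ω) x) +
        2 * Ω x * ωb x * constraintI Ω ω x = 0 := by
  intro x hx
  have hUx : U ∈ 𝓝 x := hU.mem_nhds hx
  have hΩx : Ω x ≠ 0 := (hΩpos x hx).ne'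
  have hC2 {f : (Fin 4 → ℝ) → ℝ} (hf : ContDiffOn ℝ (⊤ : ℕ∞) f U) :
      ContDiffAt ℝ 2 f x :=
    (hf.contDiffAt hUx).of_le (WithTop.coe_le_coe.2 le_top)
  have hL := hC2 (hΩs.log fun y hy => (hΩpos y hy).ne')
  have dΩ := (hC2 hΩs).differentiableAt two_ne_zero
  have dω := (hC2 hωs).differentiableAt two_ne_zero
  have dωb := (hC2 hωbs).differentiableAt two_ne_zero
  have dX a := (hC2 (hXs a)).differentiableAt two_ne_zero
  have hνI : pdCoord 1 (transportDeriv X (fun y => Real.log (Ω y))) x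
      = -2 * (pdCoord 1 Ω x * ωb x + Ω x * pdCoord 1 ωb x) := by
    have hI : Set.EqOn (transportDeriv X (fun y => Real.log (Ω y)))
        (fun y => -2 * Ω y * ωb y) U := fun y hy => by
      linear_combination (norm := (unfold transportDeriv; ring)) heqI y hy
    rw [pdCoord_congr_of_eqOn hU hx hI, pdCoord_mul (dΩ.const_mul _) dωb, pdCoord_const_mul dΩ]
    ring
  have hshift : ∑ a : Fin 2, pdCoord 1 (X a) x * pdCoord a.succ.succ (fun y => Real.log (Ω y)) x
      = -(4 * Ω x ^ 2 * ∑ a : Fin 2, ∑ b : Fin 2,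
          (γ x)⁻¹ a b * ζ a x * pdCoord b.succ.succ (fun y => Real.log (Ω y)) x) := by
    rw [← (hγsym x hx).inv.sum_sum_mul_swap]
    simp only [fun a => eq_neg_of_add_eq_zero_left (heqII x hx a), Finset.mul_sum,
      Finset.sum_mul, ← Finset.sum_neg_distrib]
    ring_nf
  rw [pdCoord_transportDeriv dX hL, ← mul_pdCoord_log dΩ hΩx] at hνI
  change transportDeriv X (constraintI Ω ω) x + 2 * Ω x * ωb x * constraintI Ω ω x = 0
  rw [transportDeriv_constraintI hL dΩ dω, ← mul_transportDeriv_log dΩ hΩx, constraintI]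
  linear_combination (norm := (unfold transportDeriv; ring))
    hνI - hshift + 2 * Ω x * ω x * heqI x hx + 2 * Ω x * (heqIII x hx - heqIV x hx)

/-- **Propagation of the lapse constraint** (first part of Lemma 2.1).  On an open set
`U ⊆ ℝ⁴` with coordinates `(λ, ν, ω¹, ω²)`, assume `Ω > 0`, the metric `γ` is a smooth
positive-definite symmetric `2×2` matrix field, and the equations
(i) `∂_λ log Ω + ∂_X log Ω + 2Ω ω̄ = 0`,
(ii) `∂_ν X^a + 4Ω² γ^{ab} ζ_b = 0`,
(iii) `∂_λ ω + ∂_X ω − 2Ω ω̄ ω + Ω ζ·ψ − (3/2)Ω|ζ|² + (1/2)Ω|ψ|² + B = 0`,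
(iv) `∂_ν ω̄ − 2Ω ω ω̄ − Ω ζ·ψ − (3/2)Ω|ζ|² + (1/2)Ω|ψ|² + B = 0`
hold on `U`, where `ψ_a = ∂_a log Ω`.  Then `ℐ = ∂_ν log Ω + 2Ωω` satisfies the
homogeneous transport equation `∂_λ ℐ + X^a ∂_a ℐ + 2Ω ω̄ ℐ = 0` on `U`. -/
theorem lapse_constraint_propagation
    (U : Set (Fin 4 → ℝ)) (hU : IsOpen U)
    (Ω ω ωb B : (Fin 4 → ℝ) → ℝ)
    (X ζ : Fin 2 → (Fin 4 → ℝ) → ℝ)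
    (γ : (Fin 4 → ℝ) → Matrix (Fin 2) (Fin 2) ℝ)
    (hΩs : ContDiffOn ℝ (⊤ : ℕ∞) Ω U) (hΩpos : ∀ x ∈ U, 0 < Ω x)
    (hωs : ContDiffOn ℝ (⊤ : ℕ∞) ω U) (hωbs : ContDiffOn ℝ (⊤ : ℕ∞) ωb U)
    (hBs : ContDiffOn ℝ (⊤ : ℕ∞) B U)
    (hXs : ∀ a, ContDiffOn ℝ (⊤ : ℕ∞) (X a) U)
    (hζs : ∀ a, ContDiffOn ℝ (⊤ : ℕ∞) (ζ a) U)
    (hγs : ∀ a b, ContDiffOn ℝ (⊤ : ℕ∞) (fun x => γ x a b) U)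
    (hγsym : ∀ x ∈ U, (γ x).IsSymm) (hγpos : ∀ x ∈ U, (γ x).PosDef)
    -- (i)  ∂_λ log Ω + ∂_X log Ω + 2Ω ω̄ = 0
    (heqI : ∀ x ∈ U,
      pdCoord 0 (fun y => Real.log (Ω y)) x +
        (∑ a : Fin 2, X a x * pdCoord a.succ.succ (fun y => Real.log (Ω y)) x) +
        2 * Ω x * ωb x = 0)
    -- (ii)  ∂_ν X^a + 4Ω² γ^{ab} ζ_b = 0
    (heqII : ∀ x ∈ U, ∀ a : Fin 2,
      pdCoord 1 (X a) x + 4 * Ω x ^ 2 * (∑ b : Fin 2, (γ x)⁻¹ a b * ζ b x) = 0)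
    -- (iii)  ∂_λ ω + ∂_X ω − 2Ω ω̄ ω + Ω ζ·ψ − (3/2)Ω|ζ|² + (1/2)Ω|ψ|² + B = 0
    (heqIII : ∀ x ∈ U,
      pdCoord 0 ω x + (∑ a : Fin 2, X a x * pdCoord a.succ.succ ω x) -
        2 * Ω x * ωb x * ω x +
        Ω x * (∑ a : Fin 2, ∑ b : Fin 2,
          (γ x)⁻¹ a b * ζ a x * pdCoord b.succ.succ (fun y => Real.log (Ω y)) x) -
        3 / 2 * Ω x * (∑ a : Fin 2, ∑ b : Fin 2, (γ x)⁻¹ a b * ζ a x * ζ b x) +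
        1 / 2 * Ω x * (∑ a : Fin 2, ∑ b : Fin 2,
          (γ x)⁻¹ a b * pdCoord a.succ.succ (fun y => Real.log (Ω y)) x *
            pdCoord b.succ.succ (fun y => Real.log (Ω y)) x) +
        B x = 0)
    -- (iv)  ∂_ν ω̄ − 2Ω ω ω̄ − Ω ζ·ψ − (3/2)Ω|ζ|² + (1/2)Ω|ψ|² + B = 0
    (heqIV : ∀ x ∈ U,
      pdCoord 1 ωb x - 2 * Ω x * ω x * ωb x -
        Ω x * (∑ a : Fin 2, ∑ b : Fin 2,
          (γ x)⁻¹ a b * ζ a x * pdCoord b.succ.succ (fun y => Real.log (Ω y)) x) -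
        3 / 2 * Ω x * (∑ a : Fin 2, ∑ b : Fin 2, (γ x)⁻¹ a b * ζ a x * ζ b x) +
        1 / 2 * Ω x * (∑ a : Fin 2, ∑ b : Fin 2,
          (γ x)⁻¹ a b * pdCoord a.succ.succ (fun y => Real.log (Ω y)) x *
            pdCoord b.succ.succ (fun y => Real.log (Ω y)) x) +
        B x = 0) :
    ∀ x ∈ U,
      pdCoord 0 (constraintI Ω ω) x +
        (∑ a : Fin 2, X a x * pdCoord a.succ.succ (constraintI Ω ω) x) +
        2 * Ω x * ωb x * constraintI Ω ω x = 0 :=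
  lapse_constraint_propagation_general U hU Ω ω ωb B X ζ γ hΩs hΩpos hωs hωbs hXs hγsym heqI heqII
    heqIII heqIV
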